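/- Bounded client drift for 1-way Gradient Transfer (convex case, Lemma): in one round of 1-way Gradient Transfer, suppose F_f and F_c are both μ-convex (μ ≥ 0) and β-smooth, x* is a global minimizer of f, and the client learning rate satisfies η ≤ 1/β. Then the client drift satisfies ℰ ≤ 16 K² η² β (f(x) − f(x*)) + 2 K² η² ((1/K) σ² + σ_c²). -/

import Mathlib

open MeasureTheory

/-- The σ-algebra generated by the centralized stochastic gradient `gc` together with all
client stochastic gradients `g j l` strictly preceding `g i k` in the lexicographic order
of the pairs `(k, i)` (step index first, then client index). -/
noncomputable def mixedFLPast {Ω E : Type*} [MeasurableSpace Ω]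
    [NormedAddCommGroup E] [InnerProductSpace ℝ E] [MeasurableSpace E]
    {S K : ℕ} (gc : Ω → E) (g : Fin S → Fin K → Ω → E) (i : Fin S) (k : Fin K) :
    MeasurableSpace Ω :=
  MeasurableSpace.comap gc inferInstance ⊔
    ⨆ (p : Fin S × Fin K)
      (_ : (p.2 : ℕ) < (k : ℕ) ∨ ((p.2 : ℕ) = (k : ℕ) ∧ (p.1 : ℕ) < (i : ℕ))),
      MeasurableSpace.comap (g p.1 p.2) inferInstance

open scoped InnerProductSpace

/-!
Fix a client and write `W k = x_i^k - x` and `ξ = g_i^k - ∇F_f(x_i^k)`. Conditionally on the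
past `ξ` is centred, hence orthogonal in `L²` to every past-measurable vector, so
`E‖W (k+1)‖² = E‖W k - η (∇F_f(x_i^k) + g_c)‖² + η² E‖ξ‖²`. Since `F_f` is convex and
`β`-smooth its gradient is cocoercive, so the gradient step `w ↦ w - η ∇F_f(w)` is
nonexpansive for `η ≤ 2/β`; splitting off `η (∇F_f(x) + g_c)` by Young's inequality gives
`E‖W (k+1)‖² ≤ (1 + c) E‖W k‖² + (1 + 1/c) η² Γ + η² σ²` with `Γ = E‖∇F_f(x) + g_c‖²`.
The choice `c = 1/(2k+1)` turns this into `E‖W k‖² ≤ 2k²η²Γ + 2kη²σ²`. Finally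
`Γ = ‖∇f(x)‖² + E‖g_c - ∇F_c(x)‖² ≤ 4β(f(x) - f(x*)) + σ_c²`, because `f` is `2β`-smooth.
-/

section Smooth

variable {E : Type*} [NormedAddCommGroup E] [InnerProductSpace ℝ E] [CompleteSpace E]
  {f : E → ℝ} {f' : E → E} {L : ℝ}

theorem HasGradientAt.add {g : E → ℝ} {g' : E} {f'' : E} {x : E}
    (hf : HasGradientAt f f'' x) (hg : HasGradientAt g g' x) :
    HasGradientAt (fun y => f y + g y) (f'' + g') x := by
  rw [hasGradientAt_iff_hasFDerivAt, map_add]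
  exact hf.hasFDerivAt.add hg.hasFDerivAt

theorem HasGradientAt.hasDerivAt_comp_add_smul {f'' y v : E} {t : ℝ}
    (hf : HasGradientAt f f'' (y + t • v)) :
    HasDerivAt (fun s : ℝ => f (y + s • v)) ⟪f'', v⟫_ℝ t := by
  have hline : HasDerivAt (fun s : ℝ => y + s • v) v t := by
    simpa using ((hasDerivAt_id t).smul_const v).const_add y
  exact hf.hasFDerivAt.comp_hasDerivAt t hline

theorem le_add_inner_add_sq_of_lipschitz_gradient (hf : ∀ w, HasGradientAt f (f' w) w)
    (hL : ∀ u v, ‖f' u - f' v‖ ≤ L * ‖u - v‖) (y z : E) :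
    f z ≤ f y + ⟪f' y, z - y⟫_ℝ + L / 2 * ‖z - y‖ ^ 2 := by
  set v := z - y
  let ψ : ℝ → ℝ := fun t => f (y + t • v) - t * ⟪f' y, v⟫_ℝ - L / 2 * t ^ 2 * ‖v‖ ^ 2
  have hψ : ∀ t, HasDerivAt ψ (⟪f' (y + t • v) - f' y, v⟫_ℝ - L * t * ‖v‖ ^ 2) t := by
    intro t
    have h := (((hf (y + t • v)).hasDerivAt_comp_add_smul).sub
      ((hasDerivAt_id t).mul_const ⟪f' y, v⟫_ℝ)).sub
      (((hasDerivAt_pow 2 t).const_mul (L / 2)).mul_const (‖v‖ ^ 2))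
    refine h.congr_deriv ?_
    rw [inner_sub_left]; ring
  have hψ' : ∀ t ∈ interior (Set.Icc (0 : ℝ) 1),
      ⟪f' (y + t • v) - f' y, v⟫_ℝ - L * t * ‖v‖ ^ 2 ≤ 0 := by
    intro t ht
    rw [interior_Icc] at ht
    have hlip : ‖f' (y + t • v) - f' y‖ ≤ L * (t * ‖v‖) := by
      simpa [norm_smul, abs_of_pos ht.1] using hL (y + t • v) y
    nlinarith [real_inner_le_norm (f' (y + t • v) - f' y) v, norm_nonneg v]
  have hanti : AntitoneOn ψ (Set.Icc 0 1) :=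
    antitoneOn_of_hasDerivWithinAt_nonpos (convex_Icc 0 1)
      (fun t _ => (hψ t).continuousAt.continuousWithinAt)
      (fun t _ => (hψ t).hasDerivWithinAt) hψ'
  have h := hanti (by simp) (by simp) zero_le_one
  simp only [ψ, one_smul, zero_smul, add_zero, one_pow, v, add_sub_cancel] at h
  linarith

variable (hf : ∀ w, HasGradientAt f (f' w) w) (hL : ∀ u v, ‖f' u - f' v‖ ≤ L * ‖u - v‖)
include hf hL

theorem apply_sub_smul_le_of_lipschitz_gradient (hL0 : 0 < L) (y w : E) :
    f (y - L⁻¹ • w) ≤ f y - L⁻¹ * ⟪f' y, w⟫_ℝ + (2 * L)⁻¹ * ‖w‖ ^ 2 := by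
  have h := le_add_inner_add_sq_of_lipschitz_gradient hf hL y (y - L⁻¹ • w)
  rw [sub_sub_cancel_left, inner_neg_right, real_inner_smul_right, norm_neg, norm_smul,
    Real.norm_of_nonneg (inv_nonneg.2 hL0.le)] at h
  convert h using 1
  field_simp
  ring

theorem sq_norm_le_of_lipschitz_gradient_of_forall_le (hL0 : 0 < L) {xs : E}
    (hxs : ∀ y, f xs ≤ f y) (x : E) : ‖f' x‖ ^ 2 ≤ 2 * L * (f x - f xs) := by
  have h := apply_sub_smul_le_of_lipschitz_gradient hf hL hL0 x (f' x)
  rw [real_inner_self_eq_norm_sq] at h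
  have hdec : (2 * L)⁻¹ * ‖f' x‖ ^ 2 ≤ f x - f xs := by
    have : L⁻¹ * ‖f' x‖ ^ 2 = 2 * ((2 * L)⁻¹ * ‖f' x‖ ^ 2) := by field_simp
    linarith [hxs (x - L⁻¹ • f' x)]
  rwa [inv_mul_le_iff₀ (by positivity)] at hdec

theorem sq_norm_sub_le_of_convex_of_lipschitz_gradient (hL0 : 0 < L)
    (hcvx : ∀ y z, ⟪f' y, z - y⟫_ℝ ≤ f z - f y) (a b : E) :
    ‖f' b - f' a‖ ^ 2 ≤ 2 * L * (f b - f a - ⟪f' a, b - a⟫_ℝ) := by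
  set d := f' b - f' a
  have h := apply_sub_smul_le_of_lipschitz_gradient hf hL hL0 b d
  have h2 := hcvx a (b - L⁻¹ • d)
  have hd : ⟪f' b, d⟫_ℝ = ⟪f' a, d⟫_ℝ + ‖d‖ ^ 2 := by
    rw [← real_inner_self_eq_norm_sq, ← inner_add_left, add_sub_cancel]
  rw [show b - L⁻¹ • d - a = (b - a) - L⁻¹ • d by abel, inner_sub_right,
    real_inner_smul_right] at h2
  rw [hd] at h
  field_simp at h h2 ⊢
  nlinarith

theorem sq_norm_sub_le_inner_of_convex_of_lipschitz_gradient (hL0 : 0 < L)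
    (hcvx : ∀ y z, ⟪f' y, z - y⟫_ℝ ≤ f z - f y) (u v : E) :
    ‖f' u - f' v‖ ^ 2 ≤ L * ⟪f' u - f' v, u - v⟫_ℝ := by
  have h1 := sq_norm_sub_le_of_convex_of_lipschitz_gradient hf hL hL0 hcvx u v
  have h2 := sq_norm_sub_le_of_convex_of_lipschitz_gradient hf hL hL0 hcvx v u
  rw [norm_sub_rev] at h1
  have : ⟪f' u - f' v, u - v⟫_ℝ = -⟪f' v, u - v⟫_ℝ - ⟪f' u, v - u⟫_ℝ := by
    rw [inner_sub_left, ← neg_sub u v, inner_neg_right]; ring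
  rw [this]
  linarith

theorem norm_gradient_step_sub_le (hL0 : 0 < L)
    (hcvx : ∀ y z, ⟪f' y, z - y⟫_ℝ ≤ f z - f y) {η : ℝ} (hη : 0 ≤ η) (hηL : η ≤ 2 / L)
    (u v : E) : ‖(u - η • f' u) - (v - η • f' v)‖ ≤ ‖u - v‖ := by
  have hco := sq_norm_sub_le_inner_of_convex_of_lipschitz_gradient hf hL hL0 hcvx u v
  have hηL' : η * L ≤ 2 := by rwa [le_div_iff₀ hL0] at hηL
  have hinner : 0 ≤ ⟪f' u - f' v, u - v⟫_ℝ :=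
    nonneg_of_mul_nonneg_right (le_trans (sq_nonneg _) hco) hL0
  rw [show (u - η • f' u) - (v - η • f' v) = (u - v) - η • (f' u - f' v) by module]
  refine (sq_le_sq₀ (norm_nonneg _) (norm_nonneg _)).1 ?_
  rw [norm_sub_sq_real, real_inner_smul_right, norm_smul, mul_pow, Real.norm_eq_abs, sq_abs,
    real_inner_comm]
  nlinarith [mul_le_mul_of_nonneg_left hco (sq_nonneg η),
    mul_le_mul_of_nonneg_right hηL' (mul_nonneg hη hinner)]

end Smooth

theorem norm_sub_sq_le_one_add_mul {E : Type*} [SeminormedAddGroup E] {c : ℝ} (hc : 0 < c)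
    (a b : E) :
    ‖a - b‖ ^ 2 ≤ (1 + c) * ‖a‖ ^ 2 + (1 + c⁻¹) * ‖b‖ ^ 2 := by
  have hab : 2 * (‖a‖ * ‖b‖) ≤ c * ‖a‖ ^ 2 + c⁻¹ * ‖b‖ ^ 2 := by
    have h := mul_nonneg (inv_nonneg.2 hc.le) (sq_nonneg (c * ‖a‖ - ‖b‖))
    have e : c⁻¹ * (c * ‖a‖ - ‖b‖) ^ 2 = c * ‖a‖ ^ 2 - 2 * (‖a‖ * ‖b‖) + c⁻¹ * ‖b‖ ^ 2 := by
      field_simp; ring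
    linarith
  have h := norm_sub_le a b
  nlinarith [norm_nonneg (a - b)]

theorem norm_sub_sub_smul_sq_le {E : Type*} [NormedAddCommGroup E] [NormedSpace ℝ E]
    {G : E → E} {η c : ℝ}
    (hG : ∀ u v, ‖(u - η • G u) - (v - η • G v)‖ ≤ ‖u - v‖) (hc : 0 < c) (y x a : E) :
    ‖y - x - η • (G y + a)‖ ^ 2 ≤ (1 + c) * ‖y - x‖ ^ 2 + (1 + c⁻¹) * η ^ 2 * ‖G x + a‖ ^ 2 := by
  have h := norm_sub_sq_le_one_add_mul hc ((y - η • G y) - (x - η • G x)) (η • (G x + a))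
  rw [show (y - η • G y) - (x - η • G x) - η • (G x + a) = y - x - η • (G y + a) by module,
    norm_smul, mul_pow, Real.norm_eq_abs, sq_abs] at h
  have h2 := pow_le_pow_left₀ (norm_nonneg _) (hG y x) 2
  nlinarith

section Probability

variable {Ω E : Type*} [NormedAddCommGroup E] [InnerProductSpace ℝ E]
  {m m0 : MeasurableSpace Ω} {μ : Measure Ω} {U ξ : Ω → E}

theorem MeasureTheory.MemLp.integrable_inner (hU : MemLp U 2 μ) (hξ : MemLp ξ 2 μ) :
    Integrable (fun ω => ⟪U ω, ξ ω⟫_ℝ) μ :=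
  (hU.norm.integrable_mul hξ.norm).mono' (hU.1.inner hξ.1)
    (ae_of_all _ fun ω => abs_real_inner_le_norm (U ω) (ξ ω))

theorem integral_norm_add_sq_of_integral_inner_eq_zero (hU : MemLp U 2 μ) (hξ : MemLp ξ 2 μ)
    (h : ∫ ω, ⟪U ω, ξ ω⟫_ℝ ∂μ = 0) :
    ∫ ω, ‖U ω + ξ ω‖ ^ 2 ∂μ = ∫ ω, ‖U ω‖ ^ 2 ∂μ + ∫ ω, ‖ξ ω‖ ^ 2 ∂μ := by
  simp_rw [norm_add_sq_real]
  have hU2 := hU.integrable_norm_pow two_ne_zero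
  have hUξ := (hU.integrable_inner hξ).const_mul 2
  rw [integral_add (f := fun ω => ‖U ω‖ ^ 2 + 2 * ⟪U ω, ξ ω⟫_ℝ) (hU2.add hUξ)
      (hξ.integrable_norm_pow two_ne_zero), integral_add hU2 hUξ, integral_const_mul, h,
    mul_zero, add_zero]

theorem integral_norm_sub_sub_smul_sq_le [IsFiniteMeasure μ] {G : E → E} {η c : ℝ} {Y gc : Ω → E}
    (hG : ∀ u v, ‖(u - η • G u) - (v - η • G v)‖ ≤ ‖u - v‖) (hc : 0 < c) (x : E)
    (hY : MemLp Y 2 μ) (hGY : MemLp (fun ω => G (Y ω)) 2 μ) (hgc : MemLp gc 2 μ) :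
    ∫ ω, ‖Y ω - x - η • (G (Y ω) + gc ω)‖ ^ 2 ∂μ ≤ (1 + c) * ∫ ω, ‖Y ω - x‖ ^ 2 ∂μ
      + (1 + c⁻¹) * η ^ 2 * ∫ ω, ‖G x + gc ω‖ ^ 2 ∂μ := by
  have hYx : Integrable (fun ω => (1 + c) * ‖Y ω - x‖ ^ 2) μ :=
    ((hY.sub (memLp_const x)).integrable_norm_pow two_ne_zero).const_mul _
  have hGx : Integrable (fun ω => (1 + c⁻¹) * η ^ 2 * ‖G x + gc ω‖ ^ 2) μ :=
    (((memLp_const (G x)).add hgc).integrable_norm_pow two_ne_zero).const_mul _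
  rw [← integral_const_mul, ← integral_const_mul, ← integral_add hYx hGx]
  have hU := (hY.sub (memLp_const x)).sub ((hGY.add hgc).const_smul η)
  exact integral_mono (hU.integrable_norm_pow two_ne_zero) (hYx.add hGx)
    fun ω => norm_sub_sub_smul_sq_le hG hc (Y ω) x (gc ω)

variable [CompleteSpace E]

theorem integral_inner_eq_zero_of_condExp_ae_eq_zero [IsFiniteMeasure μ] (hm : m ≤ m0)
    (hU : StronglyMeasurable[m] U) (hUξ : Integrable (fun ω => ⟪U ω, ξ ω⟫_ℝ) μ)
    (hξ : Integrable ξ μ) (h : μ[ξ | m] =ᵐ[μ] 0) :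
    ∫ ω, ⟪U ω, ξ ω⟫_ℝ ∂μ = 0 := by
  have hpull : μ[fun ω => ⟪U ω, ξ ω⟫_ℝ | m] =ᵐ[μ] fun ω => ⟪U ω, μ[ξ | m] ω⟫_ℝ :=
    condExp_bilin_of_stronglyMeasurable_left (innerSL ℝ) hU hUξ hξ
  rw [← integral_condExp hm, integral_congr_ae hpull]
  refine integral_eq_zero_of_ae ?_
  filter_upwards [h] with ω hω
  simp [hω]

theorem integral_norm_const_add_sq [IsProbabilityMeasure μ] (a : E) (hξ : MemLp ξ 2 μ) :
    ∫ ω, ‖a + ξ ω‖ ^ 2 ∂μ = ‖a + ∫ ω, ξ ω ∂μ‖ ^ 2 + ∫ ω, ‖ξ ω - ∫ ω, ξ ω ∂μ‖ ^ 2 ∂μ := by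
  set e := ∫ ω, ξ ω ∂μ
  have hc : MemLp (fun ω => ξ ω - e) 2 μ := hξ.sub (memLp_const e)
  have h := integral_norm_add_sq_of_integral_inner_eq_zero (memLp_const (a + e)) hc (by
    rw [integral_inner (hc.integrable one_le_two), integral_sub (hξ.integrable one_le_two)
      (integrable_const e)]
    simp [e])
  simpa using h

theorem integral_le_of_ae_condExp_le [IsProbabilityMeasure μ] (hm : m ≤ m0) {f : Ω → ℝ} {c : ℝ}
    (h : ∀ᵐ ω ∂μ, μ[f | m] ω ≤ c) : ∫ ω, f ω ∂μ ≤ c := by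
  rw [← integral_condExp hm]
  simpa using integral_mono_ae integrable_condExp (integrable_const c) h

theorem integral_norm_add_smul_sq_of_condExp_ae_eq_zero [IsFiniteMeasure μ] (hm : m ≤ m0)
    (hU : MemLp U 2 μ) (hUm : StronglyMeasurable[m] U) (hξ : MemLp ξ 2 μ)
    (h : μ[ξ | m] =ᵐ[μ] 0) (a : ℝ) :
    ∫ ω, ‖U ω + a • ξ ω‖ ^ 2 ∂μ = ∫ ω, ‖U ω‖ ^ 2 ∂μ + a ^ 2 * ∫ ω, ‖ξ ω‖ ^ 2 ∂μ := by
  have horth : ∫ ω, ⟪U ω, a • ξ ω⟫_ℝ ∂μ = 0 := by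
    simp_rw [real_inner_smul_right]
    rw [integral_const_mul, integral_inner_eq_zero_of_condExp_ae_eq_zero hm hUm
      (hU.integrable_inner hξ) (hξ.integrable one_le_two) h, mul_zero]
  rw [integral_norm_add_sq_of_integral_inner_eq_zero (ξ := fun ω => a • ξ ω) hU
    (hξ.const_smul a) horth]
  simp_rw [norm_smul, mul_pow, Real.norm_eq_abs, sq_abs]
  rw [integral_const_mul]

theorem integral_norm_sub_smul_add_sub_sq_le [IsProbabilityMeasure μ] (hm : m ≤ m0) {G : E → E}
    (hGc : Continuous G) {η c : ℝ} (hG : ∀ u v, ‖(u - η • G u) - (v - η • G v)‖ ≤ ‖u - v‖)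
    (hc : 0 < c) (x : E)
    {Y g gc : Ω → E} {σ : ℝ} (hY : MemLp Y 2 μ) (hYm : StronglyMeasurable[m] Y) (hg : MemLp g 2 μ)
    (hgc : MemLp gc 2 μ) (hgcm : StronglyMeasurable[m] gc)
    (hmean : μ[g | m] =ᵐ[μ] fun ω => G (Y ω))
    (hvar : ∀ᵐ ω ∂μ, μ[fun ω => ‖g ω - G (Y ω)‖ ^ 2 | m] ω ≤ σ ^ 2) :
    ∫ ω, ‖Y ω - η • (g ω + gc ω) - x‖ ^ 2 ∂μ ≤ (1 + c) * ∫ ω, ‖Y ω - x‖ ^ 2 ∂μ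
      + (1 + c⁻¹) * η ^ 2 * ∫ ω, ‖G x + gc ω‖ ^ 2 ∂μ + η ^ 2 * σ ^ 2 := by
  have hGY : MemLp (fun ω => G (Y ω)) 2 μ := (hg.condExp one_le_two).ae_eq hmean
  have hGYm : StronglyMeasurable[m] (fun ω => G (Y ω)) := hGc.comp_stronglyMeasurable hYm
  have hξ0 : μ[fun ω => g ω - G (Y ω) | m] =ᵐ[μ] 0 := by
    change μ[g - fun ω => G (Y ω) | m] =ᵐ[μ] 0
    filter_upwards [condExp_sub (hg.integrable one_le_two) (hGY.integrable one_le_two) m,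
      hmean] with ω h1 h2
    rw [h1, Pi.sub_apply, h2, condExp_of_stronglyMeasurable hm hGYm
      (hGY.integrable one_le_two), sub_self, Pi.zero_apply]
  have hsplit := integral_norm_add_smul_sq_of_condExp_ae_eq_zero
    (U := fun ω => Y ω - x - η • (G (Y ω) + gc ω)) (ξ := fun ω => g ω - G (Y ω)) hm
    ((hY.sub (memLp_const x)).sub ((hGY.add hgc).const_smul η))
    ((hYm.sub stronglyMeasurable_const).sub ((hGYm.add hgcm).const_smul η)) (hg.sub hGY) hξ0 (-η)
  have hvar' : ∫ ω, ‖g ω - G (Y ω)‖ ^ 2 ∂μ ≤ σ ^ 2 := integral_le_of_ae_condExp_le hm hvar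
  have hdrift := integral_norm_sub_sub_smul_sq_le hG hc x hY hGY hgc
  have heq (ω : Ω) : Y ω - η • (g ω + gc ω) - x
      = Y ω - x - η • (G (Y ω) + gc ω) + (-η) • (g ω - G (Y ω)) := by module
  simp only [heq, hsplit]
  nlinarith [mul_le_mul_of_nonneg_left hvar' (sq_nonneg η)]

end Probability

theorem le_of_one_add_mul_recursion {D : ℕ → ℝ} {K : ℕ} {A B : ℝ} (hA : 0 ≤ A) (hB : 0 ≤ B)
    (h0 : D 0 = 0)
    (hstep : ∀ k < K, ∀ c > 0, D (k + 1) ≤ (1 + c) * D k + (1 + c⁻¹) * A + B) :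
    ∀ n ≤ K, D n ≤ 2 * n ^ 2 * A + 2 * n * B := by
  intro n
  induction n with
  | zero => simp [h0]
  | succ k ih =>
    intro hk
    set q : ℝ := (2 * k + 1)⁻¹
    have hq : 0 < q := by positivity
    have hqk : q * (2 * k) ≤ 1 := by
      rw [inv_mul_le_one₀ (by positivity)]; linarith
    have h := hstep k hk q hq
    rw [inv_inv] at h
    have hDk := mul_le_mul_of_nonneg_left (ih (Nat.le_of_succ_le hk))
      (by positivity : (0 : ℝ) ≤ 1 + q)
    push_cast
    nlinarith [mul_le_mul_of_nonneg_right hqk (mul_nonneg (Nat.cast_nonneg k) hA),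
      mul_le_mul_of_nonneg_right hqk hB]

theorem one_div_mul_sum_sum_le {ι κ : Type*} [Fintype ι] [Fintype κ] {f : ι → κ → ℝ} {B : ℝ}
    (hB : 0 ≤ B) (hf : ∀ i k, f i k ≤ B) :
    1 / ((Fintype.card κ : ℝ) * Fintype.card ι) * ∑ i, ∑ k, f i k ≤ B := by
  have hsum : ∑ i, ∑ k, f i k ≤ (Fintype.card κ * Fintype.card ι : ℝ) * B :=
    calc ∑ i, ∑ k, f i k ≤ ∑ _i : ι, ∑ _k : κ, B :=
          Finset.sum_le_sum fun i _ => Finset.sum_le_sum fun k _ => hf i k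
      _ = _ := by simp only [Finset.sum_const, Finset.card_univ, nsmul_eq_mul]; ring
  rcases (by positivity : (0 : ℝ) ≤ Fintype.card κ * Fintype.card ι).eq_or_lt with h | h
  · rw [← h]; simpa using hB
  · rwa [one_div_mul_eq_div, div_le_iff₀ h, mul_comm B]

section Iterates

variable {Ω E : Type*} [NormedAddCommGroup E] [NormedSpace ℝ E] {K : ℕ} {X : ℕ → Ω → E}
  {g : Fin K → Ω → E} {gc : Ω → E} {x : E} {η : ℝ}
  (hX0 : X 0 = fun _ => x)
  (hXstep : ∀ k : Fin K, X ((k : ℕ) + 1) = fun ω => X k ω - η • (g k ω + gc ω))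
include hX0 hXstep

theorem memLp_iterate {m0 : MeasurableSpace Ω} {μ : Measure Ω} [IsFiniteMeasure μ]
    (hg : ∀ k, MemLp (g k) 2 μ) (hgc : MemLp gc 2 μ) : ∀ n ≤ K, MemLp (X n) 2 μ := by
  intro n
  induction n with
  | zero => intro; rw [hX0]; exact memLp_const x
  | succ n ih =>
    intro hn
    rw [hXstep ⟨n, hn⟩]
    exact (ih (by omega)).sub (((hg _).add hgc).const_smul η)

theorem stronglyMeasurable_iterate {m : MeasurableSpace Ω} (hgc : StronglyMeasurable[m] gc)
    (n : ℕ) (hg : ∀ k : Fin K, (k : ℕ) < n → StronglyMeasurable[m] (g k)) (hn : n ≤ K) :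
    StronglyMeasurable[m] (X n) := by
  induction n with
  | zero => rw [hX0]; exact stronglyMeasurable_const
  | succ n ih =>
    rw [hXstep ⟨n, hn⟩]
    exact (ih (fun k hk => hg k (by omega)) (by omega)).sub
      (((hg _ (Nat.lt_succ_self n)).add hgc).const_smul η)

end Iterates

section Past

variable {Ω E : Type*} [MeasurableSpace Ω] [NormedAddCommGroup E] [InnerProductSpace ℝ E]
  [MeasurableSpace E] {S K : ℕ} {gc : Ω → E} {g : Fin S → Fin K → Ω → E}

theorem mixedFLPast_le (hgc : Measurable gc) (hg : ∀ i k, Measurable (g i k)) (i : Fin S)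
    (k : Fin K) : mixedFLPast gc g i k ≤ ‹MeasurableSpace Ω› :=
  sup_le hgc.comap_le (iSup₂_le fun p _ => (hg p.1 p.2).comap_le)

theorem measurable_mixedFLPast_centralized (i : Fin S) (k : Fin K) :
    Measurable[mixedFLPast gc g i k] gc :=
  Measurable.of_comap_le le_sup_left

theorem measurable_mixedFLPast_of_lt (i : Fin S) {k l : Fin K} (hl : (l : ℕ) < k) :
    Measurable[mixedFLPast gc g i k] (g i l) :=
  Measurable.of_comap_le <| le_sup_right.trans' <|
    le_iSup₂ (f := fun (p : Fin S × Fin K) (_ : (p.2 : ℕ) < k ∨ ((p.2 : ℕ) = k ∧ (p.1 : ℕ) < i)) =>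
      MeasurableSpace.comap (g p.1 p.2) inferInstance) (i, l) (Or.inl hl)

end Past

theorem integral_norm_iterate_sub_sq_le {Ω E : Type*} [MeasurableSpace Ω] {μ : Measure Ω}
    [IsProbabilityMeasure μ] [NormedAddCommGroup E] [InnerProductSpace ℝ E] [CompleteSpace E]
    [SecondCountableTopology E] [MeasurableSpace E] [BorelSpace E] {S K : ℕ} {x : E}
    {η σ : ℝ} {G : E → E} (hGc : Continuous G)
    (hG : ∀ u v, ‖(u - η • G u) - (v - η • G v)‖ ≤ ‖u - v‖) {gc : Ω → E}
    {g : Fin S → Fin K → Ω → E} {X : ℕ → Ω → E} (i : Fin S) (hgc_meas : Measurable gc)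
    (hg_meas : ∀ i k, Measurable (g i k)) (hgc : MemLp gc 2 μ) (hg : ∀ k, MemLp (g i k) 2 μ)
    (hX0 : X 0 = fun _ => x)
    (hXstep : ∀ k : Fin K, X ((k : ℕ) + 1) = fun ω => X k ω - η • (g i k ω + gc ω))
    (hmean : ∀ k, μ[g i k | mixedFLPast gc g i k] =ᵐ[μ] fun ω => G (X k ω))
    (hvar : ∀ k, ∀ᵐ ω ∂μ,
      μ[fun ω => ‖g i k ω - G (X k ω)‖ ^ 2 | mixedFLPast gc g i k] ω ≤ σ ^ 2) :
    ∀ n ≤ K, ∫ ω, ‖X n ω - x‖ ^ 2 ∂μ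
      ≤ 2 * n ^ 2 * (η ^ 2 * ∫ ω, ‖G x + gc ω‖ ^ 2 ∂μ) + 2 * n * (η ^ 2 * σ ^ 2) := by
  refine le_of_one_add_mul_recursion (by positivity) (by positivity) (by simp [hX0])
    fun k hk c hc => ?_
  have hgcm : StronglyMeasurable[mixedFLPast gc g i ⟨k, hk⟩] gc :=
    (measurable_mixedFLPast_centralized i _).stronglyMeasurable
  have hXm := stronglyMeasurable_iterate hX0 hXstep hgcm k
    (fun l hl => (measurable_mixedFLPast_of_lt i hl).stronglyMeasurable) hk.le
  have h := integral_norm_sub_smul_add_sub_sq_le (mixedFLPast_le hgc_meas hg_meas i ⟨k, hk⟩)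
    hGc hG hc x (memLp_iterate hX0 hXstep hg hgc k hk.le) hXm (hg ⟨k, hk⟩) hgc hgcm
    (hmean ⟨k, hk⟩) (hvar ⟨k, hk⟩)
  rw [hXstep ⟨k, hk⟩]
  linarith

theorem integral_norm_gradient_add_sq_le {Ω E : Type*} [MeasurableSpace Ω] {μ : Measure Ω}
    [IsProbabilityMeasure μ] [NormedAddCommGroup E] [InnerProductSpace ℝ E] [CompleteSpace E]
    {Ff Fc : E → ℝ} (hFf : Differentiable ℝ Ff) (hFc : Differentiable ℝ Fc) {β σc : ℝ}
    (hβ : 0 < β) (hFf_smooth : ∀ y z, ‖gradient Ff y - gradient Ff z‖ ≤ β * ‖y - z‖)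
    (hFc_smooth : ∀ y z, ‖gradient Fc y - gradient Fc z‖ ≤ β * ‖y - z‖) {xs : E}
    (hxs : ∀ y, Ff xs + Fc xs ≤ Ff y + Fc y) (x : E) {gc : Ω → E} (hgc : MemLp gc 2 μ)
    (hgc_mean : ∫ ω, gc ω ∂μ = gradient Fc x)
    (hgc_var : ∫ ω, ‖gc ω - gradient Fc x‖ ^ 2 ∂μ ≤ σc ^ 2) :
    ∫ ω, ‖gradient Ff x + gc ω‖ ^ 2 ∂μ
      ≤ 4 * β * ((Ff x + Fc x) - (Ff xs + Fc xs)) + σc ^ 2 := by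
  have hgrad := sq_norm_le_of_lipschitz_gradient_of_forall_le
    (fun w => (hFf w).hasGradientAt.add (hFc w).hasGradientAt)
    (fun u v => by
      rw [add_sub_add_comm]
      linarith [norm_add_le (gradient Ff u - gradient Ff v) (gradient Fc u - gradient Fc v),
        hFf_smooth u v, hFc_smooth u v])
    (by positivity : 0 < 2 * β) hxs x
  rw [integral_norm_const_add_sq _ hgc, hgc_mean]
  linarith

theorem owgt_bounded_drift_convex_general
    {E : Type*} [NormedAddCommGroup E] [InnerProductSpace ℝ E] [FiniteDimensional ℝ E]
    [MeasurableSpace E] [BorelSpace E]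
    {Ω : Type*} [MeasurableSpace Ω] (μ : Measure Ω) [IsProbabilityMeasure μ]
    -- current model, local steps, cohort size, learning rates, effective step size
    (x : E) (K S : ℕ)
    (η : ℝ) (hη : 0 < η)
    -- federated and centralized losses
    (Ff Fc : E → ℝ) (hFf_diff : Differentiable ℝ Ff) (hFc_diff : Differentiable ℝ Fc)
    (β σ σc : ℝ)
    -- centralized stochastic gradient: mean ∇F_c(x), variance at most σc²
    (gc : Ω → E) (hgc_meas : Measurable gc) (hgc_L2 : MemLp gc 2 μ)
    (hgc_mean : ∫ ω, gc ω ∂μ = gradient Fc x)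
    (hgc_var : ∫ ω, ‖gc ω - gradient Fc x‖ ^ 2 ∂μ ≤ σc ^ 2)
    -- client stochastic gradients
    (g : Fin S → Fin K → Ω → E)
    (hg_meas : ∀ i k, Measurable (g i k)) (hg_L2 : ∀ i k, MemLp (g i k) 2 μ)
    -- local iterates: x_i^0 = x and x_i^{k+1} = x_i^k − η (g_i^{k+1} + g_c)
    (X : Fin S → ℕ → Ω → E)
    (hX0 : ∀ i, X i 0 = fun _ => x)
    (hXstep : ∀ i (k : Fin K),
      X i ((k : ℕ) + 1) = fun ω => X i (k : ℕ) ω - η • (g i k ω + gc ω))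
    -- conditionally on the past, g i k has mean ∇F_f(x_i^k) and variance at most σ²
    (hg_condmean : ∀ i k,
      μ[g i k | mixedFLPast gc g i k] =ᵐ[μ] fun ω => gradient Ff (X i (k : ℕ) ω))
    (hg_condvar : ∀ i k, ∀ᵐ ω ∂μ,
      (μ[(fun ω' => ‖g i k ω' - gradient Ff (X i (k : ℕ) ω')‖ ^ 2) |
          mixedFLPast gc g i k]) ω ≤ σ ^ 2)
    -- client drift
    (drift : ℝ)
    (hdrift : drift = (1 / ((K : ℝ) * (S : ℝ))) *
      ∑ i : Fin S, ∑ k : Fin K, ∫ ω, ‖X i (k : ℕ) ω - x‖ ^ 2 ∂μ)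
    -- μ-convexity and β-smoothness of the federated and centralized losses
    (μc : ℝ) (hμc : 0 ≤ μc)
    (hFf_conv : ∀ y z : E, ⟪gradient Ff y, z - y⟫_ℝ ≤ Ff z - Ff y - (μc / 2) * ‖y - z‖ ^ 2)
    (hFf_smooth : ∀ y z : E, ‖gradient Ff y - gradient Ff z‖ ≤ β * ‖y - z‖)
    (hFc_smooth : ∀ y z : E, ‖gradient Fc y - gradient Fc z‖ ≤ β * ‖y - z‖)
    -- x* is a global minimizer of f = F_f + F_c
    (xs : E) (hxs : ∀ y, Ff xs + Fc xs ≤ Ff y + Fc y)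
    -- client learning rate bound
    (hηβ : η ≤ 1 / β) :
    drift
      ≤ 16 * (K : ℝ) ^ 2 * η ^ 2 * β * ((Ff x + Fc x) - (Ff xs + Fc xs))
        + 2 * (K : ℝ) ^ 2 * η ^ 2 * ((1 / (K : ℝ)) * σ ^ 2 + σc ^ 2) := by
  have hβ : 0 < β := one_div_pos.1 (hη.trans_le hηβ)
  have hFf_cvx (y z : E) : ⟪gradient Ff y, z - y⟫_ℝ ≤ Ff z - Ff y := by
    nlinarith [hFf_conv y z, mul_nonneg hμc (sq_nonneg ‖y - z‖)]
  have hG_cont : Continuous (gradient Ff) :=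
    (LipschitzWith.of_dist_le_mul (K := β.toNNReal) fun u v => by
      simpa [dist_eq_norm, hβ.le] using hFf_smooth u v).continuous
  have hG_step := norm_gradient_step_sub_le (fun w => (hFf_diff w).hasGradientAt) hFf_smooth
    hβ hFf_cvx hη.le (hηβ.trans (by gcongr; norm_num))
  set Γ := ∫ ω, ‖gradient Ff x + gc ω‖ ^ 2 ∂μ
  have hK (i : Fin S) (k : Fin K) : ∫ ω, ‖X i k ω - x‖ ^ 2 ∂μ
      ≤ 2 * K ^ 2 * (η ^ 2 * Γ) + 2 * K * (η ^ 2 * σ ^ 2) := by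
    refine (integral_norm_iterate_sub_sq_le hG_cont hG_step i hgc_meas hg_meas hgc_L2 (hg_L2 i)
      (hX0 i) (hXstep i) (hg_condmean i) (hg_condvar i) k k.isLt.le).trans ?_
    have hk : (k : ℝ) ≤ K := by exact_mod_cast k.isLt.le
    gcongr
  have hΓ : Γ ≤ 4 * β * ((Ff x + Fc x) - (Ff xs + Fc xs)) + σc ^ 2 :=
    integral_norm_gradient_add_sq_le hFf_diff hFc_diff hβ hFf_smooth hFc_smooth hxs x hgc_L2
      hgc_mean hgc_var
  have hσ : 2 * (K : ℝ) ^ 2 * η ^ 2 * ((1 / K) * σ ^ 2 + σc ^ 2)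
      = 2 * K * (η ^ 2 * σ ^ 2) + 2 * K ^ 2 * η ^ 2 * σc ^ 2 := by
    rcases eq_or_ne (K : ℝ) 0 with h | h
    · simp [h]
    · field_simp
  have havg := one_div_mul_sum_sum_le (by positivity) hK
  rw [Fintype.card_fin, Fintype.card_fin] at havg
  rw [hdrift, hσ]
  refine havg.trans ?_
  nlinarith [mul_le_mul_of_nonneg_left hΓ (by positivity : (0 : ℝ) ≤ 2 * K ^ 2 * η ^ 2),
    mul_nonneg (by positivity : (0 : ℝ) ≤ K ^ 2 * η ^ 2 * β) (sub_nonneg.2 (hxs x))]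

/-- Bounded client drift for 1-way Gradient Transfer (convex case, Lemma): if `F_f` and
`F_c` are `μ`-convex and `β`-smooth, `x*` is a global minimizer of `f`, and `η ≤ 1/β`,
then `ℰ ≤ 16K²η²β(f(x) − f(x*)) + 2K²η²((1/K)σ² + σc²)`. -/
theorem owgt_bounded_drift_convex
    {E : Type*} [NormedAddCommGroup E] [InnerProductSpace ℝ E] [FiniteDimensional ℝ E]
    [MeasurableSpace E] [BorelSpace E]
    {Ω : Type*} [MeasurableSpace Ω] (μ : Measure Ω) [IsProbabilityMeasure μ]
    -- current model, local steps, cohort size, learning rates, effective step size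
    (x : E) (K S : ℕ) (hK : 1 ≤ K) (hS : 1 ≤ S)
    (η ηs ηt : ℝ) (hη : 0 < η) (hηs : 0 < ηs) (hηt : ηt = (K : ℝ) * ηs * η)
    -- federated and centralized losses
    (Ff Fc : E → ℝ) (hFf_diff : Differentiable ℝ Ff) (hFc_diff : Differentiable ℝ Fc)
    (β σ σc : ℝ) (hβ : 0 < β)
    -- centralized stochastic gradient: mean ∇F_c(x), variance at most σc²
    (gc : Ω → E) (hgc_meas : Measurable gc) (hgc_L2 : MemLp gc 2 μ)
    (hgc_mean : ∫ ω, gc ω ∂μ = gradient Fc x)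
    (hgc_var : ∫ ω, ‖gc ω - gradient Fc x‖ ^ 2 ∂μ ≤ σc ^ 2)
    -- client stochastic gradients
    (g : Fin S → Fin K → Ω → E)
    (hg_meas : ∀ i k, Measurable (g i k)) (hg_L2 : ∀ i k, MemLp (g i k) 2 μ)
    -- local iterates: x_i^0 = x and x_i^{k+1} = x_i^k − η (g_i^{k+1} + g_c)
    (X : Fin S → ℕ → Ω → E)
    (hX0 : ∀ i, X i 0 = fun _ => x)
    (hXstep : ∀ i (k : Fin K),
      X i ((k : ℕ) + 1) = fun ω => X i (k : ℕ) ω - η • (g i k ω + gc ω))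
    -- conditionally on the past, g i k has mean ∇F_f(x_i^k) and variance at most σ²
    (hg_condmean : ∀ i k,
      μ[g i k | mixedFLPast gc g i k] =ᵐ[μ] fun ω => gradient Ff (X i (k : ℕ) ω))
    (hg_condvar : ∀ i k, ∀ᵐ ω ∂μ,
      (μ[(fun ω' => ‖g i k ω' - gradient Ff (X i (k : ℕ) ω')‖ ^ 2) |
          mixedFLPast gc g i k]) ω ≤ σ ^ 2)
    -- server update
    (xplus : Ω → E)
    (hxplus : xplus = fun ω =>
      x - (ηt / ((K : ℝ) * (S : ℝ))) • ∑ i : Fin S, ∑ k : Fin K, (g i k ω + gc ω))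
    -- client drift
    (drift : ℝ)
    (hdrift : drift = (1 / ((K : ℝ) * (S : ℝ))) *
      ∑ i : Fin S, ∑ k : Fin K, ∫ ω, ‖X i (k : ℕ) ω - x‖ ^ 2 ∂μ)
    -- μ-convexity and β-smoothness of the federated and centralized losses
    (μc : ℝ) (hμc : 0 ≤ μc)
    (hFf_conv : ∀ y z : E, ⟪gradient Ff y, z - y⟫_ℝ ≤ Ff z - Ff y - (μc / 2) * ‖y - z‖ ^ 2)
    (hFc_conv : ∀ y z : E, ⟪gradient Fc y, z - y⟫_ℝ ≤ Fc z - Fc y - (μc / 2) * ‖y - z‖ ^ 2)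
    (hFf_smooth : ∀ y z : E, ‖gradient Ff y - gradient Ff z‖ ≤ β * ‖y - z‖)
    (hFc_smooth : ∀ y z : E, ‖gradient Fc y - gradient Fc z‖ ≤ β * ‖y - z‖)
    -- x* is a global minimizer of f = F_f + F_c
    (xs : E) (hxs : ∀ y, Ff xs + Fc xs ≤ Ff y + Fc y)
    -- client learning rate bound
    (hηβ : η ≤ 1 / β) :
    drift
      ≤ 16 * (K : ℝ) ^ 2 * η ^ 2 * β * ((Ff x + Fc x) - (Ff xs + Fc xs))
        + 2 * (K : ℝ) ^ 2 * η ^ 2 * ((1 / (K : ℝ)) * σ ^ 2 + σc ^ 2) :=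
  owgt_bounded_drift_convex_general μ x K S η hη Ff Fc hFf_diff hFc_diff β σ σc gc hgc_meas hgc_L2
    hgc_mean hgc_var g hg_meas hg_L2 X hX0 hXstep hg_condmean hg_condvar drift hdrift μc hμc
    hFf_conv hFf_smooth hFc_smooth xs hxs hηβ
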